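/- arXiv:2408.01522 — 5 statements merged into one kernel-verified Lean document; each statement's English description precedes it below -/
import Mathlib

section
/- The map μ: ℍ → (Im ℍ ⊗ Im ℍ)* defined by μ(Φ) = (1/2)γ̃*(ΦΦ*) satisfies μ(Φ) = 0 if and only if Φ = 0, where γ̃(v ⊗ ξ)Φ = -vΦξ for v, ξ ∈ Im ℍ and γ̃* denotes the adjoint with respect to the natural inner products. -/
/- STATEMENT 0: The hyperkähler moment map μ(Φ) = (1/2)γ̃*(ΦΦ*) on ℍ vanishes iff Φ = 0. -/
theorem stmt_0 (Φ : Quaternion ℝ) :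
    (∀ v ξ : Quaternion ℝ, v.re = 0 → ξ.re = 0 →
      (1 / 2 : ℝ) * ((-(v * Φ * ξ)) * star Φ).re = 0) ↔ Φ = 0 := by
  constructor
  · intro h
    have h1 := h (id ⟨0,1,0,0⟩ : Quaternion ℝ) (id ⟨0,1,0,0⟩ : Quaternion ℝ) rfl rfl
    have h2 := h (id ⟨0,0,1,0⟩ : Quaternion ℝ) (id ⟨0,0,1,0⟩ : Quaternion ℝ) rfl rfl
    have h3 := h (id ⟨0,0,0,1⟩ : Quaternion ℝ) (id ⟨0,0,0,1⟩ : Quaternion ℝ) rfl rfl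
    have h4 := h (id ⟨0,1,0,0⟩ : Quaternion ℝ) (id ⟨0,0,1,0⟩ : Quaternion ℝ) rfl rfl
    have h5 := h (id ⟨0,1,0,0⟩ : Quaternion ℝ) (id ⟨0,0,0,1⟩ : Quaternion ℝ) rfl rfl
    have h6 := h (id ⟨0,0,1,0⟩ : Quaternion ℝ) (id ⟨0,0,0,1⟩ : Quaternion ℝ) rfl rfl
    have h7 := h (id ⟨0,0,1,0⟩ : Quaternion ℝ) (id ⟨0,1,0,0⟩ : Quaternion ℝ) rfl rfl
    have h8 := h (id ⟨0,0,0,1⟩ : Quaternion ℝ) (id ⟨0,1,0,0⟩ : Quaternion ℝ) rfl rfl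
    have h9 := h (id ⟨0,0,0,1⟩ : Quaternion ℝ) (id ⟨0,0,1,0⟩ : Quaternion ℝ) rfl rfl
    simp [Quaternion.re_mul, Quaternion.imI_mul, Quaternion.imJ_mul,
      Quaternion.imK_mul] at h1 h2 h3 h4 h5 h6 h7 h8 h9
    simp [id] at h1 h2 h3 h4 h5 h6 h7 h8 h9
    set a := Φ.re; set b := Φ.imI; set c := Φ.imJ; set d := Φ.imK
    have e1 : a ^ 2 = b ^ 2 := by nlinarith [h1, h2]
    have e2 : a ^ 2 = c ^ 2 := by nlinarith [h1, h3]
    have e3 : a ^ 2 = d ^ 2 := by nlinarith [h2, h3]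
    have eab : a * b = 0 := by nlinarith [h6, h9]
    have ha : a = 0 := by
      have h4' : (a ^ 2) ^ 2 = 0 := by nlinarith [e1, eab]
      have := pow_eq_zero_iff (n := 2) (by norm_num) |>.mp h4'
      exact pow_eq_zero_iff (n := 2) (by norm_num) |>.mp this
    have hb : b = 0 := pow_eq_zero_iff (n := 2) (by norm_num) |>.mp (by rw [← e1, ha]; ring)
    have hc : c = 0 := pow_eq_zero_iff (n := 2) (by norm_num) |>.mp (by rw [← e2, ha]; ring)
    have hd : d = 0 := pow_eq_zero_iff (n := 2) (by norm_num) |>.mp (by rw [← e3, ha]; ring)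
    ext <;> simp only [Quaternion.re_zero, Quaternion.imI_zero, Quaternion.imJ_zero, Quaternion.imK_zero] <;> assumption
  · rintro rfl; intro v ξ _ _; simp; rfl
end

section
/- The moment map μ: ℍ → (Im ℍ ⊗ Im ℍ)* is Sp(1)-equivariant for the action ρ(p)Φ = Φ p̄ on ℍ and the adjoint-type action on Im ℍ ⊗ Im ℍ, and its differential satisfies ⟨(dμ)_Φ φ, v ⊗ ξ⟩ = ⟨γ(v)ρ(ξ)Φ, φ⟩ for all Φ, φ ∈ ℍ and v, ξ ∈ Im ℍ. -/
/-- The bilinear moment map: ⟨μ(φ,ψ), v ⊗ ξ⟩ = (1/2)Re((-(vφξ))(star ψ)), the pairing of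
μ(φ,ψ) = (1/2)γ̃*(φψ*) with v ⊗ ξ ∈ Im ℍ ⊗ Im ℍ (inner product ⟨p,q⟩ = Re(p q̄)). -/
noncomputable def muB (φ ψ v ξ : Quaternion ℝ) : ℝ :=
  (1 / 2 : ℝ) * ((-(v * φ * ξ)) * star ψ).re

/- STATEMENT 2: The moment map μ: ℍ → (Im ℍ ⊗ Im ℍ)* is Sp(1)-equivariant for the action
ρ(p)Φ = Φ p̄ on ℍ and the adjoint-type action on Im ℍ ⊗ Im ℍ (acting by ξ ↦ p̄ ξ p on the
second factor), and its differential satisfies ⟨(dμ)_Φ φ, v ⊗ ξ⟩ = ⟨γ(v)ρ(ξ)Φ, φ⟩,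
where γ(v)Φ = vΦ and ρ(ξ)Φ = Φ ξ̄ = -Φξ for imaginary ξ; since μ is quadratic,
(dμ)_Φ φ = μ(Φ,φ) + μ(φ,Φ). -/
theorem stmt_2 :
    (∀ p Φ v ξ : Quaternion ℝ, ‖p‖ = 1 → v.re = 0 → ξ.re = 0 →
      muB (Φ * star p) (Φ * star p) v ξ = muB Φ Φ v (star p * ξ * p)) ∧
    (∀ Φ φ v ξ : Quaternion ℝ, v.re = 0 → ξ.re = 0 →
      muB Φ φ v ξ + muB φ Φ v ξ = ((v * (Φ * star ξ)) * star φ).re) := by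
  constructor
  · intro p Φ v ξ _ _ _
    unfold muB
    congr 2
    simp only [star_mul, star_star]
    simp [mul_assoc]
    rfl
  · intro Φ φ v ξ hv hξ
    unfold muB
    simp only [Quaternion.re_mul, Quaternion.imI_mul, Quaternion.imJ_mul, Quaternion.imK_mul, Quaternion.re_star, Quaternion.imI_star, Quaternion.imJ_star, Quaternion.imK_star, Quaternion.re_neg, Quaternion.imI_neg, Quaternion.imJ_neg, Quaternion.imK_neg]
    obtain ⟨a0, a1, a2, a3⟩ := Φ
    obtain ⟨b0, b1, b2, b3⟩ := φ
    obtain ⟨c0, c1, c2, c3⟩ := v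
    obtain ⟨d0, d1, d2, d3⟩ := ξ
    simp_all [Quaternion.ext_iff, Quaternion.re_mul, Quaternion.imI_mul,
      Quaternion.imJ_mul, Quaternion.imK_mul]
    ring
end

section
/- The linear map v ↦ 1∧v + *₃v from Im ℍ to Λ²₊(ℍ) (self-dual 2-forms on ℍ ≅ ℝ⁴) is an isomorphism, and under this identification the homomorphism π₊: (Sp(1)×Sp(1))/{±1} → SO(Im ℍ), π₊[p₊,p₋](w) = p₊ w p̄₊, corresponds to the induced action of SO(4) on Λ²₊. -/
/-- Real inner product on ℍ: ⟨p,q⟩ = Re(p q̄). -/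
noncomputable def ipQ (p q : Quaternion ℝ) : ℝ := (p * star q).re

/-- The 2-form 1∧v + *₃v on ℍ ≅ ℝ⁴ associated to an imaginary quaternion v, as an
(anti-symmetric) bilinear form: (1∧v)(x,y) = ⟨1,x⟩⟨v,y⟩ - ⟨v,x⟩⟨1,y⟩ and
(*₃v)(x,y) = ⟨v, Im(x) × Im(y)⟩, where for imaginary quaternions a × b = Im(ab). -/
noncomputable def lamPlus (v x y : Quaternion ℝ) : ℝ :=
  ipQ 1 x * ipQ v y - ipQ v x * ipQ 1 y + ipQ v ((x.im * y.im).im)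

namespace Stmt5Aux

@[simp] lemma e1_re : (⟨0,1,0,0⟩ : Quaternion ℝ).re = 0 := rfl
@[simp] lemma e1_imI : (⟨0,1,0,0⟩ : Quaternion ℝ).imI = 1 := rfl
@[simp] lemma e1_imJ : (⟨0,1,0,0⟩ : Quaternion ℝ).imJ = 0 := rfl
@[simp] lemma e1_imK : (⟨0,1,0,0⟩ : Quaternion ℝ).imK = 0 := rfl
@[simp] lemma e2_re : (⟨0,0,1,0⟩ : Quaternion ℝ).re = 0 := rfl
@[simp] lemma e2_imI : (⟨0,0,1,0⟩ : Quaternion ℝ).imI = 0 := rfl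
@[simp] lemma e2_imJ : (⟨0,0,1,0⟩ : Quaternion ℝ).imJ = 1 := rfl
@[simp] lemma e2_imK : (⟨0,0,1,0⟩ : Quaternion ℝ).imK = 0 := rfl
@[simp] lemma e3_re : (⟨0,0,0,1⟩ : Quaternion ℝ).re = 0 := rfl
@[simp] lemma e3_imI : (⟨0,0,0,1⟩ : Quaternion ℝ).imI = 0 := rfl
@[simp] lemma e3_imJ : (⟨0,0,0,1⟩ : Quaternion ℝ).imJ = 0 := rfl
@[simp] lemma e3_imK : (⟨0,0,0,1⟩ : Quaternion ℝ).imK = 1 := rfl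
@[simp] lemma v_re (a b c : ℝ) : (⟨0,a,b,c⟩ : Quaternion ℝ).re = 0 := rfl
@[simp] lemma v_imI (a b c : ℝ) : (⟨0,a,b,c⟩ : Quaternion ℝ).imI = a := rfl
@[simp] lemma v_imJ (a b c : ℝ) : (⟨0,a,b,c⟩ : Quaternion ℝ).imJ = b := rfl
@[simp] lemma v_imK (a b c : ℝ) : (⟨0,a,b,c⟩ : Quaternion ℝ).imK = c := rfl

/-- For imaginary v, lamPlus v x y = Re(v x ȳ). -/
lemma lamPlus_eq (v x y : Quaternion ℝ) (hv : v.re = 0) :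
    lamPlus v x y = (v * x * star y).re := by
  simp only [lamPlus, ipQ, Quaternion.re_mul, Quaternion.imI_mul, Quaternion.imJ_mul,
    Quaternion.imK_mul, Quaternion.re_star, Quaternion.imI_star, Quaternion.imJ_star,
    Quaternion.imK_star, Quaternion.re_im, Quaternion.imI_im, Quaternion.imJ_im,
    Quaternion.imK_im, Quaternion.re_one, Quaternion.imI_one, Quaternion.imJ_one,
    Quaternion.imK_one, hv]
  ring

lemma re_mul_comm (a b : Quaternion ℝ) : (a * b).re = (b * a).re := by
  rw [Quaternion.re_mul, Quaternion.re_mul]; ring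

lemma qdecomp (x : Quaternion ℝ) :
    x = (x.re • 1 + x.imI • @id (Quaternion ℝ) ⟨0,1,0,0⟩ + x.imJ • @id (Quaternion ℝ) ⟨0,0,1,0⟩ + x.imK • @id (Quaternion ℝ) ⟨0,0,0,1⟩ : Quaternion ℝ) := by
  apply Quaternion.ext
  · change x.re = x.re * 1 + x.imI * 0 + x.imJ * 0 + x.imK * 0; ring
  · change x.imI = x.re * 0 + x.imI * 1 + x.imJ * 0 + x.imK * 0; ring
  · change x.imJ = x.re * 0 + x.imI * 0 + x.imJ * 1 + x.imK * 0; ring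
  · change x.imK = x.re * 0 + x.imI * 0 + x.imJ * 0 + x.imK * 1; ring

end Stmt5Aux

open Stmt5Aux in
theorem stmt_5 :
    (∀ v : Quaternion ℝ, v.re = 0 → (∀ x y, lamPlus v x y = 0) → v = 0) ∧
    (∀ B : Quaternion ℝ →ₗ[ℝ] Quaternion ℝ →ₗ[ℝ] ℝ,
      ((∀ x y, B x y = -B y x) ∧
        B 1 ⟨0,1,0,0⟩ = B ⟨0,0,1,0⟩ ⟨0,0,0,1⟩ ∧
        B 1 ⟨0,0,1,0⟩ = B ⟨0,0,0,1⟩ ⟨0,1,0,0⟩ ∧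
        B 1 ⟨0,0,0,1⟩ = B ⟨0,1,0,0⟩ ⟨0,0,1,0⟩) ↔
      (∃ v : Quaternion ℝ, v.re = 0 ∧ ∀ x y, B x y = lamPlus v x y)) ∧
    (∀ pp pm : Quaternion ℝ, ‖pp‖ = 1 → ‖pm‖ = 1 →
      ∀ v : Quaternion ℝ, v.re = 0 → ∀ x y : Quaternion ℝ,
        lamPlus (pp * v * star pp) x y =
          lamPlus v (star pp * x * pm) (star pp * y * pm)) := by
  refine ⟨?_, ?_, ?_⟩
  · -- injectivity
    intro v hv h
    have key : ∀ w : Quaternion ℝ, (v * 1 * star w).re = 0 := fun w => by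
      rw [← lamPlus_eq v 1 w hv]; exact h 1 w
    simp only [mul_one, Quaternion.re_mul, Quaternion.re_star, Quaternion.imI_star, Quaternion.imJ_star,
      Quaternion.imK_star] at key
    have h1 := key ⟨0,1,0,0⟩
    have h2 := key ⟨0,0,1,0⟩
    have h3 := key ⟨0,0,0,1⟩
    simp only [mul_one, Quaternion.re_mul, Quaternion.re_star, Quaternion.imI_star, Quaternion.imJ_star,
      Quaternion.imK_star, Quaternion.re_one, Quaternion.imI_one, Quaternion.imJ_one,
      Quaternion.imK_one, e1_re, e1_imI, e1_imJ, e1_imK, e2_re, e2_imI, e2_imJ, e2_imK,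
      e3_re, e3_imI, e3_imJ, e3_imK] at h1 h2 h3
    apply Quaternion.ext <;>
      simp only [Quaternion.re_zero, Quaternion.imI_zero, Quaternion.imJ_zero,
        Quaternion.imK_zero] <;> linarith
  · -- characterization of self-dual forms
    intro B
    constructor
    · rintro ⟨hA, h1, h2, h3⟩
      have hz : ∀ z, B z z = 0 := fun z => by have := hA z z; linarith
      refine ⟨⟨0, B 1 ⟨0,1,0,0⟩, B 1 ⟨0,0,1,0⟩, B 1 ⟨0,0,0,1⟩⟩, rfl, ?_⟩
      intro x y
      rw [lamPlus_eq (⟨0, B 1 ⟨0,1,0,0⟩, B 1 ⟨0,0,1,0⟩, B 1 ⟨0,0,0,1⟩⟩ : Quaternion ℝ) _ _ rfl]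
      conv_lhs => rw [qdecomp x, qdecomp y]
      simp only [map_add, map_smul, LinearMap.add_apply, LinearMap.smul_apply, smul_eq_mul]
      dsimp only [id]
      rw [hz, hz ⟨0,1,0,0⟩, hz ⟨0,0,1,0⟩, hz ⟨0,0,0,1⟩,
        show B (⟨0,1,0,0⟩ : Quaternion ℝ) 1 = -B 1 ⟨0,1,0,0⟩ from by rw [hA ⟨0,1,0,0⟩ 1],
        show B (⟨0,0,1,0⟩ : Quaternion ℝ) 1 = -B 1 ⟨0,0,1,0⟩ from by rw [hA ⟨0,0,1,0⟩ 1],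
        show B (⟨0,0,0,1⟩ : Quaternion ℝ) 1 = -B 1 ⟨0,0,0,1⟩ from by rw [hA ⟨0,0,0,1⟩ 1],
        show B (⟨0,0,1,0⟩ : Quaternion ℝ) ⟨0,0,0,1⟩ = B 1 ⟨0,1,0,0⟩ from h1.symm,
        show B (⟨0,0,0,1⟩ : Quaternion ℝ) ⟨0,0,1,0⟩ = -B 1 ⟨0,1,0,0⟩ from by rw [hA ⟨0,0,0,1⟩ ⟨0,0,1,0⟩, ← h1],
        show B (⟨0,0,0,1⟩ : Quaternion ℝ) ⟨0,1,0,0⟩ = B 1 ⟨0,0,1,0⟩ from h2.symm,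
        show B (⟨0,1,0,0⟩ : Quaternion ℝ) ⟨0,0,0,1⟩ = -B 1 ⟨0,0,1,0⟩ from by rw [hA ⟨0,1,0,0⟩ ⟨0,0,0,1⟩, ← h2],
        show B (⟨0,1,0,0⟩ : Quaternion ℝ) ⟨0,0,1,0⟩ = B 1 ⟨0,0,0,1⟩ from h3.symm,
        show B (⟨0,0,1,0⟩ : Quaternion ℝ) ⟨0,1,0,0⟩ = -B 1 ⟨0,0,0,1⟩ from by rw [hA ⟨0,0,1,0⟩ ⟨0,1,0,0⟩, ← h3]]
      set w : Quaternion ℝ := ⟨0, B 1 ⟨0,1,0,0⟩, B 1 ⟨0,0,1,0⟩, B 1 ⟨0,0,0,1⟩⟩ with hw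
      simp only [Quaternion.re_mul, Quaternion.re_star, Quaternion.imI_star,
        Quaternion.imJ_star, Quaternion.imK_star, Quaternion.re_one, Quaternion.imI_one,
        Quaternion.imJ_one, Quaternion.imK_one, v_re, v_imI, v_imJ, v_imK,
        Quaternion.imI_mul, Quaternion.imJ_mul, Quaternion.imK_mul]
      simp only [hw, v_re, v_imI, v_imJ, v_imK]
      ring
    · rintro ⟨v, hv, hB⟩
      have hcoord : ∀ x y : Quaternion ℝ, B x y = (v * x * star y).re := fun x y => by
        rw [hB, lamPlus_eq v x y hv]
      simp only [Quaternion.re_mul, Quaternion.imI_mul, Quaternion.imJ_mul, Quaternion.imK_mul,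
        Quaternion.re_star, Quaternion.imI_star, Quaternion.imJ_star, Quaternion.imK_star] at hcoord
      refine ⟨fun x y => ?_, ?_, ?_, ?_⟩ <;>
        simp only [hcoord, hcoord 1 ⟨0,1,0,0⟩, hcoord ⟨0,0,1,0⟩ ⟨0,0,0,1⟩, hcoord 1 ⟨0,0,1,0⟩,
          hcoord ⟨0,0,0,1⟩ ⟨0,1,0,0⟩, hcoord 1 ⟨0,0,0,1⟩, hcoord ⟨0,1,0,0⟩ ⟨0,0,1,0⟩] <;>
        simp only [Quaternion.re_mul, Quaternion.re_star, Quaternion.imI_star,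
          Quaternion.imJ_star, Quaternion.imK_star, Quaternion.re_one, Quaternion.imI_one,
          Quaternion.imJ_one, Quaternion.imK_one, e1_re, e1_imI, e1_imJ, e1_imK, e2_re, e2_imI,
          e2_imJ, e2_imK, e3_re, e3_imI, e3_imJ, e3_imK, Quaternion.imI_mul, Quaternion.imJ_mul,
          Quaternion.imK_mul, hv] <;>
        ring
  · -- equivariance
    intro pp pm hpp hpm v hv x y
    have hre : (pp * v * star pp).re = 0 := by
      simp only [Quaternion.re_mul, Quaternion.imI_mul, Quaternion.imJ_mul, Quaternion.imK_mul,
        Quaternion.re_star, Quaternion.imI_star, Quaternion.imJ_star, Quaternion.imK_star]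
      linear_combination (pp.re ^ 2 + pp.imI ^ 2 + pp.imJ ^ 2 + pp.imK ^ 2) * hv
    rw [lamPlus_eq _ x y hre, lamPlus_eq v _ _ hv]
    have hpm1 : pm * star pm = 1 := by
      rw [Quaternion.self_mul_star, Quaternion.normSq_eq_norm_mul_self, hpm]
      norm_num
    rw [star_mul, star_mul, star_star]
    have key : v * (star pp * x * pm) * (star pm * (star y * pp))
        = v * (star pp * (x * (star y * pp))) := by
      simp only [mul_assoc]
      rw [show pm * (star pm * (star y * pp)) = star y * pp from by
        rw [← mul_assoc, hpm1, one_mul]]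
    rw [key]
    have := re_mul_comm pp (v * (star pp * (x * star y)))
    simp only [mul_assoc] at this ⊢
    rw [this]
end

section
/- Let (f,λ,ω) with f, λ real numbers and ω a vector in a 2-dimensional real inner product space, g_Σ the inner product tensor and vol_Σ the area form. If (f² - λ² - |ω|²)g_Σ - 2fλ·vol_Σ + ω⊗ω = 0 as a bilinear form, then ω = 0, f = 0, and λ = 0. -/
open Matrix

/-! The off-diagonal and trace-free diagonal parts of the tensor give `ω₀ω₁ = 0` and `ω₀² = ω₁²`,
its antisymmetric part gives `fλ = 0`, and, once `ω = 0`, its diagonal gives `f² = λ²`.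
In a domain a pair `ab = 0`, `a² = b²` forces `a = b = 0`. -/

theorem eq_zero_and_eq_zero_of_mul_eq_zero_of_mul_self_eq {R : Type*} [CommSemiring R]
    [NoZeroDivisors R] {a b : R} (hab : a * b = 0) (hsq : a * a = b * b) : a = 0 ∧ b = 0 := by
  have ha : a = 0 := mul_self_eq_zero.mp <| mul_self_eq_zero.mp <| calc
    a * a * (a * a) = a * a * (b * b) := congrArg (a * a * ·) hsq
    _ = (a * b) * (a * b) := by ring
    _ = 0 := by rw [hab, zero_mul]
  exact ⟨ha, mul_self_eq_zero.mp (by rw [← hsq, ha, zero_mul])⟩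

theorem stmt_14 (f l : ℝ) (ω : Fin 2 → ℝ)
    (h : ∀ i j : Fin 2,
      (f ^ 2 - l ^ 2 - ω ⬝ᵥ ω) * (if i = j then (1 : ℝ) else 0)
        - 2 * f * l * (![![0, 1], ![-1, 0]] i j) + ω i * ω j = 0) :
    ω = 0 ∧ f = 0 ∧ l = 0 := by
  have h00 := h 0 0
  have h01 := h 0 1
  have h10 := h 1 0
  have h11 := h 1 1
  simp only [dotProduct, Fin.sum_univ_two, Fin.isValue, cons_val', cons_val_zero, cons_val_one,
    cons_val_fin_one, ↓reduceIte, zero_ne_one, one_ne_zero, mul_one, mul_zero, mul_neg,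
    sub_zero, zero_sub, sub_neg_eq_add] at h00 h01 h10 h11
  obtain ⟨hω₀, hω₁⟩ := eq_zero_and_eq_zero_of_mul_eq_zero_of_mul_self_eq
    (by linear_combination (h01 + h10) / 2 : ω 0 * ω 1 = 0)
    (by linear_combination h00 - h11 : ω 0 * ω 0 = ω 1 * ω 1)
  obtain ⟨hf, hl⟩ := eq_zero_and_eq_zero_of_mul_eq_zero_of_mul_self_eq
    (by linear_combination (h10 - h01) / 4 : f * l = 0)
    (by linear_combination h00 + ω 1 * hω₁ : f * f = l * l)
  refine ⟨?_, hf, hl⟩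
  ext i
  fin_cases i <;> assumption
end

section
/- Let W be an oriented 3-dimensional real inner product space with Hodge star *₃ and the metric tensor g ∈ W⊗W. Then for f ∈ ℝ and σ ∈ W, the tensor μ(f,σ) = (f²-|σ|²)g - 2*₃(fσ) + σ⊗σ vanishes if and only if f = 0 and σ = 0. -/
/-!
The term `-2 *₃(fσ)` is the antisymmetric part of `μ(f, σ)` and the rest is symmetric, so both
vanish separately. The antisymmetric part vanishing says `f σ = 0`; the diagonal of the symmetric
part, `f² - |σ|² + σᵢ² = 0`, then forces the remaining factor to vanish as well.
-/

open Matrix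

theorem eq_zero_of_symm_add_antisymm_eq_zero {ι M : Type*} [AddCommGroup M] [IsAddTorsionFree M]
    {s a : ι → ι → M} (hs : ∀ i j, s j i = s i j) (ha : ∀ i j, a j i = -a i j)
    (h : ∀ i j, s i j + a i j = 0) (i j : ι) : a i j = 0 := by
  have hji := h j i
  rw [hs, ha, ← sub_eq_add_neg, sub_eq_zero] at hji
  rw [← self_eq_neg, ← add_eq_zero_iff_eq_neg, ← h i j, hji]

theorem dotProduct_cross_single_swap {R : Type*} [CommRing R] (σ : Fin 3 → R) (i j : Fin 3) :
    σ ⬝ᵥ (Pi.single j 1 ⨯₃ Pi.single i 1) = -(σ ⬝ᵥ (Pi.single i 1 ⨯₃ Pi.single j 1)) := by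
  rw [← cross_anticomm, dotProduct_neg]

theorem exists_dotProduct_cross_single_eq {R : Type*} [CommRing R] (σ : Fin 3 → R) (k : Fin 3) :
    ∃ i j : Fin 3, σ ⬝ᵥ (Pi.single i 1 ⨯₃ Pi.single j 1) = σ k := by
  fin_cases k
  · exact ⟨1, 2, by simp [cross_apply, dotProduct, Fin.sum_univ_three]⟩
  · exact ⟨2, 0, by simp [cross_apply, dotProduct, Fin.sum_univ_three]⟩
  · exact ⟨0, 1, by simp [cross_apply, dotProduct, Fin.sum_univ_three]⟩

theorem eq_zero_of_smul_eq_zero_of_sq_sub_add_mul_self_eq_zero {n R : Type*} [Fintype n]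
    [Field R] [LinearOrder R] [IsStrictOrderedRing R] (hn : 1 < Fintype.card n) {f : R}
    {σ : n → R} (hfσ : f • σ = 0) (h : ∀ i, f ^ 2 - σ ⬝ᵥ σ + σ i * σ i = 0) :
    f = 0 ∧ σ = 0 := by
  rcases smul_eq_zero.1 hfσ with rfl | rfl
  · have htrace : ((Fintype.card n : R) - 1) * (σ ⬝ᵥ σ) = 0 := by
      have := Finset.sum_eq_zero (s := Finset.univ) fun i _ => h i
      rw [Finset.sum_add_distrib, ← dotProduct] at this
      simp only [Finset.sum_const, Finset.card_univ, nsmul_eq_mul] at this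
      linear_combination -this
    have hn' : (Fintype.card n : R) - 1 ≠ 0 := by
      rw [sub_ne_zero]; exact_mod_cast hn.ne'
    exact ⟨rfl, dotProduct_self_eq_zero.1 ((mul_eq_zero.1 htrace).resolve_left hn')⟩
  · have : Nonempty n := Fintype.card_pos_iff.1 (by omega)
    simpa using h (Classical.arbitrary n)

theorem stmt_16 (f : ℝ) (σ : Fin 3 → ℝ) :
    (∀ i j : Fin 3,
      (f ^ 2 - σ ⬝ᵥ σ) * (if i = j then (1 : ℝ) else 0)
        - 2 * (f * (σ ⬝ᵥ crossProduct (Pi.single i 1) (Pi.single j 1)))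
        + σ i * σ j = 0) ↔ (f = 0 ∧ σ = 0) := by
  refine ⟨fun h => ?_, ?_⟩
  · have hstar : ∀ i j : Fin 3, f * (σ ⬝ᵥ (Pi.single i 1 ⨯₃ Pi.single j 1)) = 0 := fun i j => by
      have := eq_zero_of_symm_add_antisymm_eq_zero
        (s := fun i j => (f ^ 2 - σ ⬝ᵥ σ) * (if i = j then 1 else 0) + σ i * σ j)
        (a := fun i j => -(2 * (f * (σ ⬝ᵥ (Pi.single i 1 ⨯₃ Pi.single j 1)))))
        (fun i j => by simp only [eq_comm, mul_comm])
        (fun i j => by simp only [dotProduct_cross_single_swap σ i j, mul_neg])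
        (fun i j => by linear_combination h i j) i j
      simpa using this
    have hfσ : f • σ = 0 := funext fun k => by
      obtain ⟨i, j, hk⟩ := exists_dotProduct_cross_single_eq σ k
      simpa [hk] using hstar i j
    refine eq_zero_of_smul_eq_zero_of_sq_sub_add_mul_self_eq_zero (by simp) hfσ fun i => ?_
    simpa [cross_self] using h i i
  · rintro ⟨rfl, rfl⟩ i j
    simp
end
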